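/- arXiv:1005.0451 — 2 statements merged into one kernel-verified Lean document; each statement's English description precedes it below -/
import Mathlib

section
/- Let f : I ⊆ ℝ → ℝ be twice differentiable on the interior I° of I, with a, b ∈ I°, a < b, f'' Lebesgue integrable on [a,b], and |f''| quasi-convex on [a,b]. If moreover |f''| is increasing on [a,b], then |(1/(b-a)) ∫_a^b f(x) dx − f((a+b)/2)| ≤ ((b-a)²/24) · |f''(b)|. -/
/-! Two integrations by parts against the Peano kernel of the midpoint rule, `(x - a)² / 2` on
`[a, (a + b) / 2]` and `(x - b)² / 2` on `[(a + b) / 2, b]`, express the error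
`∫ f - (b - a) f((a + b) / 2)` as an integral of `f''`. The kernel is nonnegative with total mass
`(b - a)³ / 24`, and since `|f''|` is increasing it is bounded by `|f'' b|` on `[a, b]`. -/

open MeasureTheory Set intervalIntegral

lemma intervalIntegrable_of_hasDerivAt {f f' : ℝ → ℝ} {a b : ℝ}
    (hf : ∀ x ∈ uIcc a b, HasDerivAt f (f' x) x) : IntervalIntegrable f volume a b :=
  ContinuousOn.intervalIntegrable fun x hx => (hf x hx).continuousAt.continuousWithinAt

lemma hasDerivAt_sub_sq_div_two (c x : ℝ) :
    HasDerivAt (fun y => (y - c) ^ 2 / 2) (x - c) x := by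
  simpa using (((hasDerivAt_id x).sub_const c).pow 2).div_const 2

lemma integral_sub_sq_div_two_mul_eq {f f' f'' : ℝ → ℝ} {c d : ℝ}
    (hf : ∀ x ∈ uIcc c d, HasDerivAt f (f' x) x)
    (hf' : ∀ x ∈ uIcc c d, HasDerivAt f' (f'' x) x)
    (hf'' : IntervalIntegrable f'' volume c d) :
    ∫ x in c..d, (x - c) ^ 2 / 2 * f'' x =
      (d - c) ^ 2 / 2 * f' d - (d - c) * f d + ∫ x in c..d, f x := by
  have hsq := integral_mul_deriv_eq_deriv_mul (fun x _ => hasDerivAt_sub_sq_div_two c x) hf'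
    ((by fun_prop : Continuous fun x : ℝ => x - c).intervalIntegrable _ _) hf''
  have hlin := integral_mul_deriv_eq_deriv_mul (fun x _ => (hasDerivAt_id x).sub_const c) hf
    intervalIntegrable_const (intervalIntegrable_of_hasDerivAt hf')
  simp only [sub_self, id, one_mul] at hsq hlin
  rw [hsq, hlin]
  ring

lemma abs_integral_sub_sq_div_two_mul_le {g : ℝ → ℝ} {c d M : ℝ}
    (hg : ∀ x ∈ uIcc c d, |g x| ≤ M) :
    |∫ x in c..d, (x - c) ^ 2 / 2 * g x| ≤ |d - c| ^ 3 / 6 * M := by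
  have hM : 0 ≤ M := (abs_nonneg _).trans (hg c left_mem_uIcc)
  have hpt : ∀ᵐ x ∂volume.restrict (uIoc c d),
      ‖(x - c) ^ 2 / 2 * g x‖ ≤ (x - c) ^ 2 / 2 * M :=
    ae_restrict_of_forall_mem measurableSet_uIoc fun x hx => by
      rw [Real.norm_eq_abs, abs_mul, abs_of_nonneg (by positivity)]
      exact mul_le_mul_of_nonneg_left (hg x (uIoc_subset_uIcc hx)) (by positivity)
  have hkernel : ∫ x in c..d, (x - c) ^ 2 / 2 * M = (d - c) ^ 3 / 6 * M := by
    simp only [intervalIntegral.integral_mul_const, intervalIntegral.integral_div,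
      integral_comp_sub_right fun x => x ^ 2, integral_pow]
    ring
  calc |∫ x in c..d, (x - c) ^ 2 / 2 * g x|
      ≤ |∫ x in c..d, (x - c) ^ 2 / 2 * M| :=
        norm_integral_le_abs_of_norm_le hpt
          ((by fun_prop : Continuous fun x : ℝ => (x - c) ^ 2 / 2 * M).intervalIntegrable _ _)
    _ = |d - c| ^ 3 / 6 * M := by
        rw [hkernel, abs_mul, abs_div, abs_pow, abs_of_nonneg hM]
        norm_num

lemma add_div_two_mem_uIcc (a b : ℝ) : (a + b) / 2 ∈ uIcc a b := by
  rw [mem_uIcc]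
  rcases le_total a b with h | h
  · exact .inl ⟨by linarith, by linarith⟩
  · exact .inr ⟨by linarith, by linarith⟩

lemma integral_sub_mul_midpoint_eq {f f' f'' : ℝ → ℝ} {a b : ℝ}
    (hf : ∀ x ∈ uIcc a b, HasDerivAt f (f' x) x)
    (hf' : ∀ x ∈ uIcc a b, HasDerivAt f' (f'' x) x)
    (hf'' : IntervalIntegrable f'' volume a b) :
    (∫ x in a..b, f x) - (b - a) * f ((a + b) / 2) =
      (∫ x in a..(a + b) / 2, (x - a) ^ 2 / 2 * f'' x) -
        ∫ x in b..(a + b) / 2, (x - b) ^ 2 / 2 * f'' x := by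
  have hl : uIcc a ((a + b) / 2) ⊆ uIcc a b :=
    uIcc_subset_uIcc left_mem_uIcc (add_div_two_mem_uIcc a b)
  have hr : uIcc b ((a + b) / 2) ⊆ uIcc a b :=
    uIcc_subset_uIcc right_mem_uIcc (add_div_two_mem_uIcc a b)
  rw [integral_sub_sq_div_two_mul_eq (fun x hx => hf x (hl hx)) (fun x hx => hf' x (hl hx))
      (hf''.mono_set hl),
    integral_sub_sq_div_two_mul_eq (fun x hx => hf x (hr hx)) (fun x hx => hf' x (hr hx))
      (hf''.mono_set hr),
    ← integral_add_adjacent_intervals (intervalIntegrable_of_hasDerivAt fun x hx => hf x (hl hx))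
      (intervalIntegrable_of_hasDerivAt fun x hx => hf x (hr hx)).symm,
    integral_symm b]
  ring

lemma abs_integral_sub_mul_midpoint_le {f f' f'' : ℝ → ℝ} {a b M : ℝ}
    (hf : ∀ x ∈ uIcc a b, HasDerivAt f (f' x) x)
    (hf' : ∀ x ∈ uIcc a b, HasDerivAt f' (f'' x) x)
    (hf'' : IntervalIntegrable f'' volume a b) (hM : ∀ x ∈ uIcc a b, |f'' x| ≤ M) :
    |(∫ x in a..b, f x) - (b - a) * f ((a + b) / 2)| ≤ |b - a| ^ 3 / 24 * M := by
  have hl : uIcc a ((a + b) / 2) ⊆ uIcc a b :=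
    uIcc_subset_uIcc left_mem_uIcc (add_div_two_mem_uIcc a b)
  have hr : uIcc b ((a + b) / 2) ⊆ uIcc a b :=
    uIcc_subset_uIcc right_mem_uIcc (add_div_two_mem_uIcc a b)
  have hal : |(a + b) / 2 - a| = |b - a| / 2 := by
    rw [show (a + b) / 2 - a = (b - a) / 2 by ring, abs_div, abs_two]
  have hbr : |(a + b) / 2 - b| = |b - a| / 2 := by
    rw [show (a + b) / 2 - b = -((b - a) / 2) by ring, abs_neg, abs_div, abs_two]
  rw [integral_sub_mul_midpoint_eq hf hf' hf'']
  calc _ ≤ |∫ x in a..(a + b) / 2, (x - a) ^ 2 / 2 * f'' x| +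
          |∫ x in b..(a + b) / 2, (x - b) ^ 2 / 2 * f'' x| := abs_sub _ _
    _ ≤ |(a + b) / 2 - a| ^ 3 / 6 * M + |(a + b) / 2 - b| ^ 3 / 6 * M :=
        add_le_add (abs_integral_sub_sq_div_two_mul_le fun x hx => hM x (hl hx))
          (abs_integral_sub_sq_div_two_mul_le fun x hx => hM x (hr hx))
    _ = |b - a| ^ 3 / 24 * M := by rw [hal, hbr]; ring

theorem hermite_hadamard_second_deriv_abs_quasiconvex_increasing_general
    (I : Set ℝ) (hI : I.OrdConnected) (f f' f'' : ℝ → ℝ) (a b : ℝ)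
    (ha : a ∈ interior I) (hb : b ∈ interior I) (hab : a < b)
    (hderiv1 : ∀ x ∈ interior I, HasDerivAt f (f' x) x)
    (hderiv2 : ∀ x ∈ interior I, HasDerivAt f' (f'' x) x)
    (hint : IntervalIntegrable f'' volume a b)
    (hmono : MonotoneOn (fun x => |f'' x|) (Set.Icc a b)) :
    |(1 / (b - a)) * (∫ x in a..b, f x) - f ((a + b) / 2)| ≤
      (b - a) ^ 2 / 24 * |f'' b| := by
  have hsub : uIcc a b ⊆ interior I := hI.interior.uIcc_subset ha hb
  have hbound : ∀ x ∈ uIcc a b, |f'' x| ≤ |f'' b| := fun x hx => by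
    rw [uIcc_of_le hab.le] at hx
    exact hmono hx (right_mem_Icc.2 hab.le) hx.2
  have hba : 0 < b - a := sub_pos.2 hab
  have hmid := abs_integral_sub_mul_midpoint_le (fun x hx => hderiv1 x (hsub hx))
    (fun x hx => hderiv2 x (hsub hx)) hint hbound
  rw [abs_of_pos hba] at hmid
  calc |1 / (b - a) * (∫ x in a..b, f x) - f ((a + b) / 2)|
      = |(∫ x in a..b, f x) - (b - a) * f ((a + b) / 2)| / (b - a) := by
        rw [eq_div_iff hba.ne', ← abs_of_pos hba, ← abs_mul, abs_of_pos hba]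
        congr 1
        field_simp
    _ ≤ (b - a) ^ 3 / 24 * |f'' b| / (b - a) := div_le_div_of_nonneg_right hmid hba.le
    _ = (b - a) ^ 2 / 24 * |f'' b| := by field_simp

theorem hermite_hadamard_second_deriv_abs_quasiconvex_increasing
    (I : Set ℝ) (hI : I.OrdConnected) (f f' f'' : ℝ → ℝ) (a b : ℝ)
    (ha : a ∈ interior I) (hb : b ∈ interior I) (hab : a < b)
    (hderiv1 : ∀ x ∈ interior I, HasDerivAt f (f' x) x)
    (hderiv2 : ∀ x ∈ interior I, HasDerivAt f' (f'' x) x)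
    (hint : IntervalIntegrable f'' volume a b)
    (hqc : QuasiconvexOn ℝ (Set.Icc a b) (fun x => |f'' x|))
    (hmono : MonotoneOn (fun x => |f'' x|) (Set.Icc a b)) :
    |(1 / (b - a)) * (∫ x in a..b, f x) - f ((a + b) / 2)| ≤
      (b - a) ^ 2 / 24 * |f'' b| :=
  hermite_hadamard_second_deriv_abs_quasiconvex_increasing_general I hI f f' f'' a b ha hb hab
    hderiv1 hderiv2 hint hmono
end

section
/- Let a, b ∈ ℝ with 0 < a < b, let n ∈ ℤ with |n(n−1)| ≥ 3, and let q > 1. Then |L_n^n(a,b) − A^n(a,b)| ≤ |n(n−1)| · ((b−a)²/24) · [A(a^{q(n−2)}, b^{q(n−2)})]^{1/q}, i.e., |(b^{n+1} − a^{n+1})/((n+1)(b−a)) − ((a+b)/2)^n| ≤ |n(n−1)| · ((b−a)²/24) · [(a^{q(n−2)} + b^{q(n−2)})/2]^{1/q}. -/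
/-!
Let `K(t) = min(t - a, b - t)² / 2` be the Peano kernel of the midpoint rule. Integrating by parts
twice on each half of `[a, b]` gives `∫ₐᵇ f - (b - a) f((a + b)/2) = ∫ₐᵇ K f''`; for `f = tⁿ`
this expresses `Lₙⁿ - Aⁿ` as `n(n-1)/(b-a) · ∫ K(t) t^(n-2) dt`. Since `K` is symmetric about the
midpoint, `∫ K g = ½ ∫ K(t) (g(t) + g(a+b-t))`, and for convex `g` the bracket is at most
`g(a) + g(b)`; with `∫ K = (b-a)³/24` this bounds the integral by `(b-a)³/24 · A(g(a), g(b))`.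
Finally the arithmetic mean of `a^(n-2)` and `b^(n-2)` is at most their power mean of order `q`.
-/

open intervalIntegral MeasureTheory Set

noncomputable def midpointKernel (a b t : ℝ) : ℝ := min (t - a) (b - t) ^ 2 / 2

section midpointKernel

variable {a b t : ℝ}

theorem continuous_midpointKernel (a b : ℝ) : Continuous (midpointKernel a b) := by
  unfold midpointKernel; fun_prop

theorem midpointKernel_nonneg : 0 ≤ midpointKernel a b t := by
  unfold midpointKernel; positivity

theorem midpointKernel_add_sub (a b t : ℝ) :
    midpointKernel a b (a + b - t) = midpointKernel a b t := by
  unfold midpointKernel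
  rw [min_comm]; ring_nf

theorem midpointKernel_of_le_midpoint (ht : t ≤ (a + b) / 2) :
    midpointKernel a b t = (t - a) ^ 2 / 2 := by
  rw [midpointKernel, min_eq_left (by linarith)]

theorem midpointKernel_of_midpoint_le (ht : (a + b) / 2 ≤ t) :
    midpointKernel a b t = (t - b) ^ 2 / 2 := by
  rw [midpointKernel, min_eq_right (by linarith)]; ring

end midpointKernel

section

variable {F f f' f'' : ℝ → ℝ}

/-- Taylor's formula with integral remainder, for the primitive `F` of `f` around the point `p`. -/
theorem integral_sub_sq_mul_eq {x y : ℝ} (p : ℝ) (hF : ∀ t ∈ uIcc x y, HasDerivAt F (f t) t)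
    (hf : ∀ t ∈ uIcc x y, HasDerivAt f (f' t) t) (hf' : ∀ t ∈ uIcc x y, HasDerivAt f' (f'' t) t)
    (hf'' : IntervalIntegrable f'' volume x y) :
    ∫ t in x..y, (t - p) ^ 2 / 2 * f'' t =
      ((y - p) ^ 2 / 2 * f' y - (y - p) * f y + F y) -
        ((x - p) ^ 2 / 2 * f' x - (x - p) * f x + F x) := by
  refine integral_eq_sub_of_hasDerivAt (f := fun t => (t - p) ^ 2 / 2 * f' t - (t - p) * f t + F t)
    (fun t ht => ?_) (hf''.continuousOn_mul (g := fun t => (t - p) ^ 2 / 2) (by fun_prop))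
  have hsq : HasDerivAt (fun t => (t - p) ^ 2 / 2) (t - p) t := by
    simpa using (((hasDerivAt_id t).sub_const p).pow 2).div_const 2
  have hlin : HasDerivAt (fun t => t - p) 1 t := (hasDerivAt_id t).sub_const p
  exact (((hsq.mul (hf' t ht)).sub (hlin.mul (hf t ht))).add (hF t ht)).congr_deriv (by ring)

theorem integral_midpointKernel_mul_eq {a b : ℝ} (hab : a ≤ b)
    (hF : ∀ t ∈ Icc a b, HasDerivAt F (f t) t) (hf : ∀ t ∈ Icc a b, HasDerivAt f (f' t) t)
    (hf' : ∀ t ∈ Icc a b, HasDerivAt f' (f'' t) t)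
    (hf'' : IntervalIntegrable f'' volume a b) :
    ∫ t in a..b, midpointKernel a b t * f'' t = F b - F a - (b - a) * f ((a + b) / 2) := by
  set m := (a + b) / 2 with hm
  have ham : a ≤ m := by linarith
  have hmb : m ≤ b := by linarith
  rw [← uIcc_of_le hab] at hF hf hf'
  have hm_mem : m ∈ uIcc a b := by rw [uIcc_of_le hab]; exact ⟨ham, hmb⟩
  have hleft : uIcc a m ⊆ uIcc a b := uIcc_subset_uIcc_left hm_mem
  have hright : uIcc m b ⊆ uIcc a b := uIcc_subset_uIcc_right hm_mem
  have hKf'' : IntervalIntegrable (fun t => midpointKernel a b t * f'' t) volume a b :=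
    hf''.continuousOn_mul (continuous_midpointKernel a b).continuousOn
  have h_left :
      ∫ t in a..m, midpointKernel a b t * f'' t = ∫ t in a..m, (t - a) ^ 2 / 2 * f'' t :=
    integral_congr fun t ht => by
      rw [uIcc_of_le ham] at ht
      simp only [midpointKernel_of_le_midpoint ht.2]
  have h_right :
      ∫ t in m..b, midpointKernel a b t * f'' t = ∫ t in m..b, (t - b) ^ 2 / 2 * f'' t :=
    integral_congr fun t ht => by
      rw [uIcc_of_le hmb] at ht
      simp only [midpointKernel_of_midpoint_le ht.1]
  rw [← integral_add_adjacent_intervals (hKf''.mono_set hleft) (hKf''.mono_set hright), h_left,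
    h_right,
    integral_sub_sq_mul_eq a (fun t ht => hF t (hleft ht)) (fun t ht => hf t (hleft ht))
      (fun t ht => hf' t (hleft ht)) (hf''.mono_set hleft),
    integral_sub_sq_mul_eq b (fun t ht => hF t (hright ht)) (fun t ht => hf t (hright ht))
      (fun t ht => hf' t (hright ht)) (hf''.mono_set hright)]
  rw [hm]
  ring

theorem integral_midpointKernel {a b : ℝ} (hab : a ≤ b) :
    ∫ t in a..b, midpointKernel a b t = (b - a) ^ 3 / 24 := by
  have h := integral_midpointKernel_mul_eq (F := fun t => t ^ 3 / 6) (f := fun t => t ^ 2 / 2)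
    (f' := fun t => t) (f'' := 1) hab (fun t _ => ?_) (fun t _ => ?_)
    (fun t _ => hasDerivAt_id' t) intervalIntegrable_const
  · simp only [Pi.one_apply, mul_one] at h
    rw [h]; ring
  · exact ((hasDerivAt_pow 3 t).div_const 6).congr_deriv (by ring)
  · exact ((hasDerivAt_pow 2 t).div_const 2).congr_deriv (by ring)

end

theorem ConvexOn.add_apply_add_sub_le {g : ℝ → ℝ} {a b t : ℝ} (hg : ConvexOn ℝ (Icc a b) g)
    (ht : t ∈ Icc a b) : g t + g (a + b - t) ≤ g a + g b := by
  obtain ⟨hat, htb⟩ := ht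
  rcases (hat.trans htb).eq_or_lt with rfl | hab
  · obtain rfl : t = a := le_antisymm htb hat
    simp
  have hba : b - a ≠ 0 := by linarith
  have hw₁ : 0 ≤ (b - t) / (b - a) := div_nonneg (by linarith) (by linarith)
  have hw₂ : 0 ≤ (t - a) / (b - a) := div_nonneg (by linarith) (by linarith)
  have hsum : (b - t) / (b - a) + (t - a) / (b - a) = 1 := by field_simp; ring
  have ha : a ∈ Icc a b := left_mem_Icc.2 hab.le
  have hb : b ∈ Icc a b := right_mem_Icc.2 hab.le
  have h₁ := hg.2 ha hb hw₁ hw₂ hsum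
  have h₂ := hg.2 ha hb hw₂ hw₁ (by rw [add_comm, hsum])
  simp only [smul_eq_mul] at h₁ h₂
  have e₁ : (b - t) / (b - a) * a + (t - a) / (b - a) * b = t := by field_simp; ring
  have e₂ : (t - a) / (b - a) * a + (b - t) / (b - a) * b = a + b - t := by field_simp; ring
  rw [e₁] at h₁
  rw [e₂] at h₂
  linear_combination h₁ + h₂ + (g a + g b) * hsum

theorem ConvexOn.integral_midpointKernel_mul_le {g : ℝ → ℝ} {a b : ℝ} (hab : a ≤ b)
    (hg : ConvexOn ℝ (Icc a b) g) (hgi : IntervalIntegrable g volume a b) :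
    ∫ t in a..b, midpointKernel a b t * g t ≤ (b - a) ^ 3 / 24 * ((g a + g b) / 2) := by
  have hKg : IntervalIntegrable (fun t => midpointKernel a b t * g t) volume a b :=
    hgi.continuousOn_mul (continuous_midpointKernel a b).continuousOn
  have hKg' : IntervalIntegrable (fun t => midpointKernel a b t * g (a + b - t)) volume a b := by
    simpa only [midpointKernel_add_sub, add_sub_cancel_left, add_sub_cancel_right] using
      (hKg.comp_sub_left (a + b)).symm
  have hrefl : ∫ t in a..b, midpointKernel a b t * g (a + b - t) =
      ∫ t in a..b, midpointKernel a b t * g t := by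
    simpa only [midpointKernel_add_sub, add_sub_cancel_left, add_sub_cancel_right] using
      integral_comp_sub_left (a := a) (b := b) (fun t => midpointKernel a b t * g t) (a + b)
  calc ∫ t in a..b, midpointKernel a b t * g t
      = (∫ t in a..b, (midpointKernel a b t * g t + midpointKernel a b t * g (a + b - t))) / 2 :=
        by
        rw [integral_add hKg hKg', hrefl]; ring
    _ ≤ (∫ t in a..b, midpointKernel a b t * (g a + g b)) / 2 := by
        gcongr
        refine integral_mono_on hab (hKg.add hKg')
          ((continuous_midpointKernel a b).intervalIntegrable a b |>.mul_const _) fun t ht => ?_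
        rw [← mul_add]
        exact mul_le_mul_of_nonneg_left (hg.add_apply_add_sub_le ht) midpointKernel_nonneg
    _ = (b - a) ^ 3 / 24 * ((g a + g b) / 2) := by
        rw [intervalIntegral.integral_mul_const, integral_midpointKernel hab]; ring

theorem add_div_two_le_rpow_mean {x y p : ℝ} (hx : 0 ≤ x) (hy : 0 ≤ y) (hp : 1 ≤ p) :
    (x + y) / 2 ≤ ((x ^ p + y ^ p) / 2) ^ (1 / p) := by
  have h := Real.arith_mean_le_rpow_mean Finset.univ (fun _ : Fin 2 => 1 / 2) ![x, y]
    (fun _ _ => by norm_num) (by simp) (fun i _ => by fin_cases i <;> simpa) hp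
  simp only [Fin.sum_univ_two, Matrix.cons_val_zero, Matrix.cons_val_one] at h
  convert h using 2 <;> ring

theorem zpow_average_sub_zpow_midpoint_eq {a b : ℝ} (ha : 0 < a) (hab : a < b) {n : ℤ}
    (hn : (n : ℝ) + 1 ≠ 0) :
    (b ^ (n + 1) - a ^ (n + 1)) / ((n + 1) * (b - a)) - ((a + b) / 2) ^ n =
      n * (n - 1) * (∫ t in a..b, midpointKernel a b t * t ^ (n - 2)) / (b - a) := by
  have hne : ∀ t ∈ Icc a b, t ≠ 0 := fun t ht => (ha.trans_le ht.1).ne'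
  have hba : b - a ≠ 0 := sub_ne_zero.2 hab.ne'
  have h := integral_midpointKernel_mul_eq (F := fun t => t ^ (n + 1) / (n + 1))
    (f := fun t => t ^ n) (f' := fun t => n * t ^ (n - 1))
    (f'' := fun t => n * (n - 1) * t ^ (n - 2)) hab.le (fun t ht => ?_) (fun t ht => ?_)
    (fun t ht => ?_) ?_
  · simp only [mul_left_comm _ ((n : ℝ) * _), intervalIntegral.integral_const_mul] at h
    rw [h]
    field_simp
  · exact ((hasDerivAt_zpow (n + 1) t (Or.inl (hne t ht))).div_const _).congr_deriv
      (by push_cast; field_simp; simp)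
  · exact hasDerivAt_zpow n t (Or.inl (hne t ht))
  · exact ((hasDerivAt_zpow (n - 1) t (Or.inl (hne t ht))).const_mul _).congr_deriv
      (by push_cast; ring_nf)
  · exact (intervalIntegrable_zpow
      (Or.inr fun h0 => hne 0 (uIcc_of_le hab.le ▸ h0) rfl)).const_mul _

theorem p_logarithmic_mean_arithmetic_mean_power_mean_estimate
    (a b : ℝ) (ha : 0 < a) (hab : a < b) (n : ℤ) (hn : 3 ≤ |n * (n - 1)|)
    (q : ℝ) (hq : 1 < q) :
    |(b ^ (n + 1) - a ^ (n + 1)) / ((n + 1) * (b - a)) - ((a + b) / 2) ^ n| ≤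
      (|n * (n - 1)| : ℤ) * ((b - a) ^ 2 / 24) *
        ((a ^ (q * ((n : ℝ) - 2)) + b ^ (q * ((n : ℝ) - 2))) / 2) ^ (1 / q) := by
  have hb : 0 < b := ha.trans hab
  have hn₁ : (n : ℝ) + 1 ≠ 0 := by
    rintro h
    obtain rfl : n = -1 := by exact_mod_cast eq_neg_of_add_eq_zero_left h
    norm_num at hn
  have hconv : ConvexOn ℝ (Icc a b) fun t : ℝ => t ^ (n - 2) :=
    (convexOn_zpow (n - 2)).subset (fun t ht => ha.trans_le ht.1) (convex_Icc a b)
  have hint : IntervalIntegrable (fun t : ℝ => t ^ (n - 2)) volume a b :=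
    intervalIntegrable_zpow (Or.inr fun h0 => (uIcc_of_le hab.le ▸ h0).1.not_gt ha)
  have hpow : ∀ x : ℝ, 0 ≤ x → x ^ (q * ((n : ℝ) - 2)) = (x ^ (n - 2)) ^ q := fun x hx => by
    rw [mul_comm, Real.rpow_mul hx, ← Real.rpow_intCast]; push_cast; rfl
  have hmean :=
    add_div_two_le_rpow_mean (zpow_nonneg ha.le (n - 2)) (zpow_nonneg hb.le (n - 2)) hq.le
  set I := ∫ t in a..b, midpointKernel a b t * t ^ (n - 2)
  have hI₀ : 0 ≤ I := integral_nonneg hab.le fun t ht =>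
    mul_nonneg midpointKernel_nonneg (zpow_nonneg (ha.le.trans ht.1) _)
  have hI := hconv.integral_midpointKernel_mul_le hab.le hint
  rw [zpow_average_sub_zpow_midpoint_eq ha hab hn₁, hpow a ha.le, hpow b hb.le]
  calc _ = |(n : ℝ) * (n - 1)| * I / (b - a) := by
        rw [abs_div, abs_mul, abs_of_nonneg hI₀, abs_of_pos (sub_pos.2 hab)]
    _ ≤ |(n : ℝ) * (n - 1)| * ((b - a) ^ 3 / 24 *
          (((a ^ (n - 2)) ^ q + (b ^ (n - 2)) ^ q) / 2) ^ (1 / q)) / (b - a) := by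
        gcongr
        exact hI.trans (mul_le_mul_of_nonneg_left hmean (by positivity))
    _ = _ := by
        push_cast [Int.cast_abs]
        field_simp
end
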